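/- arXiv:1907.05472 — 2 statements merged into one kernel-verified Lean document; each statement's English description precedes it below -/
import Mathlib

section
/- Let A be a Noetherian ring, I an ideal, and M a nonzero A-module with Supp(M) ⊆ V(I). If x ∈ I acts surjectively on M (i.e., xM = M), then after passing to A' = A/ann(M), the image of x is a non-zerodivisor on A'; in particular dim A ≥ 1. -/
/-!
If `x` acts surjectively on `M`, then `x a ∈ ann M` forces `a ∈ ann M`, since
`a (x m) = (x a) m`; so `x` is a non-zerodivisor on `A ⧸ ann M`. Any prime in the support of `M`
contains `ann M` and (because the support lies in `V(I)`) also `x`, so `x` is not a unit in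
`A ⧸ ann M`. A non-unit non-zerodivisor lies in no minimal prime, which gives a chain of primes of
length one.
-/

open nonZeroDivisors

theorem Module.mk_annihilator_mem_nonZeroDivisors_of_surjective {R M : Type*} [CommRing R]
    [AddCommGroup M] [Module R M] {x : R} (hx : Function.Surjective (fun m : M => x • m)) :
    Ideal.Quotient.mk (Module.annihilator R M) x ∈ (R ⧸ Module.annihilator R M)⁰ := by
  rw [mem_nonZeroDivisors_iff_right]
  intro b hb
  obtain ⟨a, rfl⟩ := Ideal.Quotient.mk_surjective b
  rw [← map_mul, Ideal.Quotient.eq_zero_iff_mem, Module.mem_annihilator] at hb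
  rw [Ideal.Quotient.eq_zero_iff_mem, Module.mem_annihilator]
  intro m
  obtain ⟨m', rfl⟩ := hx m
  simpa only [smul_smul, mul_comm] using hb m'

theorem Ideal.Quotient.not_isUnit_mk_of_mem {R : Type*} [CommRing R] {J P : Ideal R}
    (hJP : J ≤ P) (hP : P ≠ ⊤) {x : R} (hx : x ∈ P) : ¬IsUnit (Ideal.Quotient.mk J x) := by
  have : Nontrivial (R ⧸ P) := Ideal.Quotient.nontrivial_iff.mpr hP
  intro hu
  have := hu.map (Ideal.Quotient.factor hJP)
  rw [Ideal.Quotient.factor_mk, Ideal.Quotient.eq_zero_iff_mem.mpr hx] at this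
  exact not_isUnit_zero this

theorem one_le_ringKrullDim_of_mem_nonZeroDivisors {R : Type*} [CommRing R] {r : R}
    (hr : r ∈ R⁰) (hu : ¬IsUnit r) : 1 ≤ ringKrullDim R := by
  have : Nontrivial (R ⧸ Ideal.span {r}) :=
    Ideal.Quotient.nontrivial_iff.mpr (Ideal.span_singleton_eq_top.not.mpr hu)
  calc (1 : WithBot ℕ∞) = 0 + 1 := (zero_add 1).symm
    _ ≤ ringKrullDim (R ⧸ Ideal.span {r}) + 1 := by
      gcongr
      exact ringKrullDim_nonneg_of_nontrivial
    _ ≤ ringKrullDim R := ringKrullDim_quotient_succ_le_of_nonZeroDivisor hr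

theorem stmt1_general {A : Type*} [CommRing A] (I : Ideal A)
    (M : Type*) [AddCommGroup M] [Module A M] [Nontrivial M]
    (hsupp : Module.support A M ⊆ PrimeSpectrum.zeroLocus (I : Set A))
    (x : A) (hx : x ∈ I)
    (hsurj : Function.Surjective (fun m : M => x • m)) :
    (Ideal.Quotient.mk (Module.annihilator A M) x) ∈
        nonZeroDivisors (A ⧸ Module.annihilator A M) ∧
      1 ≤ ringKrullDim A := by
  have hnzd := Module.mk_annihilator_mem_nonZeroDivisors_of_surjective hsurj
  refine ⟨hnzd, ?_⟩
  obtain ⟨p, hp⟩ := Module.nonempty_support_of_nontrivial (R := A) (M := M)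
  have hxp : x ∈ p.asIdeal := hsupp hp hx
  have hu := Ideal.Quotient.not_isUnit_mk_of_mem (Module.annihilator_le_of_mem_support hp)
    p.isPrime.ne_top hxp
  exact (one_le_ringKrullDim_of_mem_nonZeroDivisors hnzd hu).trans (ringKrullDim_quotient_le _)

/-- a coregular element for `M` becomes a non-zerodivisor modulo the
annihilator of `M`; in particular `dim A ≥ 1`. -/
theorem stmt1 {A : Type*} [CommRing A] [IsNoetherianRing A] (I : Ideal A)
    (M : Type*) [AddCommGroup M] [Module A M] [Nontrivial M]
    (hsupp : Module.support A M ⊆ PrimeSpectrum.zeroLocus (I : Set A))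
    (x : A) (hx : x ∈ I)
    (hsurj : Function.Surjective (fun m : M => x • m)) :
    (Ideal.Quotient.mk (Module.annihilator A M) x) ∈
        nonZeroDivisors (A ⧸ Module.annihilator A M) ∧
      1 ≤ ringKrullDim A :=
  stmt1_general I M hsupp x hx hsurj
end

section
/- Let A = k[x,y,z,w] be a polynomial ring over a field and let M = H^2_{(x,y)}(A) ⊕ H^2_{(z,w)}(A). Then the two socle elements 1/(xy) ∈ H^2_{(x,y)}(A) and 1/(zw) ∈ H^2_{(z,w)}(A) are not both contained in any cyclic A-submodule of M; in particular, M is not quasi-cyclic. -/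
/-- An `A`-module `M` is quasi-cyclic if it is a countable increasing union of
cyclic submodules. -/
def IsQuasiCyclic (A : Type*) [CommRing A] (M : Type*) [AddCommGroup M] [Module A M] :
    Prop :=
  ∃ N : ℕ → Submodule A M, (∀ n, ∃ m : M, N n = Submodule.span A {m}) ∧
    Monotone N ∧ ∀ m : M, ∃ n, m ∈ N n

section CechModel

variable {A : Type*} [CommRing A]

/-- The canonical map `A_u → A_{uv}` of localizations. -/
noncomputable def toAwayMulLeft (u v : A) :
    Localization.Away u →+* Localization.Away (u * v) :=
  Localization.awayLift (algebraMap A _) u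
    (isUnit_of_mul_isUnit_left
      (by rw [← map_mul]; exact IsLocalization.Away.algebraMap_isUnit (S := Localization.Away (u * v)) (x := u * v)))

/-- The canonical map `A_v → A_{uv}` of localizations. -/
noncomputable def toAwayMulRight (u v : A) :
    Localization.Away v →+* Localization.Away (u * v) :=
  Localization.awayLift (algebraMap A _) v
    (isUnit_of_mul_isUnit_right
      (by rw [← map_mul]; exact IsLocalization.Away.algebraMap_isUnit (S := Localization.Away (u * v)) (x := u * v)))

/-- The image of the Čech map `A_u ⊕ A_v → A_{uv}`, as an `A`-submodule. -/
noncomputable def cechSub (u v : A) : Submodule A (Localization.Away (u * v)) :=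
  Submodule.span A (Set.range (toAwayMulLeft u v) ∪ Set.range (toAwayMulRight u v))

/-- The Čech model of the local cohomology module `H²_{(u,v)}(A)`, namely the
cokernel of `A_u ⊕ A_v → A_{uv}`. -/
noncomputable def H2Model (u v : A) : Type _ :=
  Localization.Away (u * v) ⧸ cechSub u v

noncomputable instance (u v : A) : AddCommGroup (H2Model u v) :=
  inferInstanceAs (AddCommGroup (Localization.Away (u * v) ⧸ cechSub u v))

noncomputable instance (u v : A) : Module A (H2Model u v) :=
  inferInstanceAs (Module A (Localization.Away (u * v) ⧸ cechSub u v))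

/-- The class of `1/(uv)` in the Čech model of `H²_{(u,v)}(A)`. -/
noncomputable def socleElt (u v : A) : H2Model u v :=
  Submodule.Quotient.mk (p := cechSub u v)
    (Localization.mk 1 ⟨u * v, Submonoid.mem_powers _⟩)

end CechModel

/-! If `a • p = (1/(xy), 0)` and `b • p = (0, 1/(zw))`, then `a` kills `b • p.2 = 1/(zw)`, which
forces `a ∈ (z, w)`; but then `1/(xy) = a • p.1` lies in `(z, w) • H²_{(x,y)}(A)`, which is
impossible. Every element `t` of the image of `A_u ⊕ A_v → A_{uv}` satisfies
`(uv)ᵐ t ∈ (uᵐ, vᵐ)` for some `m`, so after clearing denominators both facts reduce to one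
statement about monomial ideals: if `xᵏyᵏh ∈ (xᵏ⁺¹, yᵏ⁺¹) + J` with `J` generated by other
variables, then `h ∈ (x, y) + J`. -/

section CechSub

variable {A : Type*} [CommRing A] {u v : A}

theorem mul_pow_mul_mem_span_pow_pair (k : ℕ) {m : ℕ} {b : A}
    (hb : b ∈ Ideal.span {u ^ m, v ^ m}) :
    (u * v) ^ k * b ∈ Ideal.span {u ^ (m + k), v ^ (m + k)} := by
  obtain ⟨f, g, rfl⟩ := Ideal.mem_span_pair.mp hb
  exact Ideal.mem_span_pair.mpr ⟨f * v ^ k, g * u ^ k, by ring⟩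

theorem toAwayMulLeft_algebraMap (a : A) :
    toAwayMulLeft u v (algebraMap A _ a) = algebraMap A _ a := by
  unfold toAwayMulLeft
  exact IsLocalization.Away.lift_eq _ _ a

theorem toAwayMulRight_algebraMap (a : A) :
    toAwayMulRight u v (algebraMap A _ a) = algebraMap A _ a := by
  unfold toAwayMulRight
  exact IsLocalization.Away.lift_eq _ _ a

theorem exists_smul_toAwayMulLeft_eq_algebraMap (e : Localization.Away u) :
    ∃ m, ∃ b ∈ Ideal.span {u ^ m, v ^ m},
      (u * v) ^ m • toAwayMulLeft u v e = algebraMap A _ b := by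
  obtain ⟨⟨f, _, m, rfl⟩, he⟩ := IsLocalization.surj (Submonoid.powers u) e
  refine ⟨m, v ^ m * f,
    Ideal.mul_mem_right _ _ (Ideal.subset_span (Set.mem_insert_of_mem _ rfl)), ?_⟩
  have := congrArg (toAwayMulLeft u v) he
  simp only [map_mul, toAwayMulLeft_algebraMap] at this
  rw [Algebra.smul_def, mul_pow, map_mul, map_mul]
  linear_combination (algebraMap A _ (v ^ m)) * this

theorem exists_smul_toAwayMulRight_eq_algebraMap (e : Localization.Away v) :
    ∃ m, ∃ b ∈ Ideal.span {u ^ m, v ^ m},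
      (u * v) ^ m • toAwayMulRight u v e = algebraMap A _ b := by
  obtain ⟨⟨g, _, m, rfl⟩, he⟩ := IsLocalization.surj (Submonoid.powers v) e
  refine ⟨m, u ^ m * g, Ideal.mul_mem_right _ _ (Ideal.subset_span (Set.mem_insert _ _)), ?_⟩
  have := congrArg (toAwayMulRight u v) he
  simp only [map_mul, toAwayMulRight_algebraMap] at this
  rw [Algebra.smul_def, mul_pow, map_mul, map_mul]
  linear_combination (algebraMap A _ (u ^ m)) * this

theorem exists_smul_eq_algebraMap_of_mem_cechSub {t : Localization.Away (u * v)}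
    (ht : t ∈ cechSub u v) :
    ∃ m, ∃ b ∈ Ideal.span {u ^ m, v ^ m}, (u * v) ^ m • t = algebraMap A _ b := by
  induction ht using Submodule.span_induction with
  | mem t ht =>
    rcases ht with ⟨e, rfl⟩ | ⟨e, rfl⟩
    · exact exists_smul_toAwayMulLeft_eq_algebraMap e
    · exact exists_smul_toAwayMulRight_eq_algebraMap e
  | zero => exact ⟨0, 0, zero_mem _, by simp⟩
  | add t t' _ _ ht ht' =>
    obtain ⟨m, b, hb, hmb⟩ := ht
    obtain ⟨m', b', hb', hmb'⟩ := ht'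
    refine ⟨m + m', (u * v) ^ m' * b + (u * v) ^ m * b',
      add_mem (mul_pow_mul_mem_span_pow_pair m' hb) (by
        rw [add_comm m]; exact mul_pow_mul_mem_span_pow_pair m hb'), ?_⟩
    rw [smul_add, map_add, map_mul, map_mul, ← Algebra.smul_def, ← Algebra.smul_def, ← hmb,
      ← hmb', ← mul_smul, ← mul_smul, ← pow_add, ← pow_add, add_comm m']
  | smul c t _ ht =>
    obtain ⟨m, b, hb, hmb⟩ := ht
    refine ⟨m, c * b, Ideal.mul_mem_left _ _ hb, ?_⟩
    rw [smul_comm, hmb, map_mul, Algebra.smul_def]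

theorem exists_mul_mem_span_pow_of_mk_mem_cechSub {a : A} {s : Submonoid.powers (u * v)}
    {N : ℕ} (hs : (s : A) = (u * v) ^ N) (h : Localization.mk a s ∈ cechSub u v) :
    ∃ n, (u * v) ^ n * a ∈ Ideal.span {u ^ (n + N), v ^ (n + N)} := by
  obtain ⟨m, b, hb, hmb⟩ := exists_smul_eq_algebraMap_of_mem_cechSub h
  rw [Localization.smul_mk, ← Localization.mk_one_eq_algebraMap, Localization.mk_eq_mk_iff,
    Localization.r_iff_exists] at hmb
  obtain ⟨⟨_, c, rfl⟩, hc⟩ := hmb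
  refine ⟨c + m, ?_⟩
  have key : (u * v) ^ (c + m) * a = (u * v) ^ (c + N) * b := by
    simp only [OneMemClass.coe_one, one_mul, hs, smul_eq_mul] at hc
    rw [pow_add, mul_assoc, hc]; ring
  rw [key, show c + m + N = m + (c + N) by ring]
  exact mul_pow_mul_mem_span_pow_pair _ hb

end CechSub

namespace MvPolynomial

variable {σ R : Type*} [CommSemiring R]

theorem mem_span_X_of_X_pow_mul_X_pow_mul_mem {i j : σ} (hij : i ≠ j) {T : Set σ} (hi : i ∉ T)
    (hj : j ∉ T) {k : ℕ} {h : MvPolynomial σ R}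
    (H : X i ^ k * X j ^ k * h ∈
      Ideal.span {X i ^ (k + 1), X j ^ (k + 1)} ⊔ Ideal.span (X '' T)) :
    h ∈ Ideal.span (X '' ({i, j} ∪ T)) := by
  classical
  have hmonomial : Ideal.span {X i ^ (k + 1), X j ^ (k + 1)} ⊔ Ideal.span (X '' T) =
      Ideal.span ((fun s => monomial s (1 : R)) ''
        ({Finsupp.single i (k + 1), Finsupp.single j (k + 1)} ∪ (Finsupp.single · 1) '' T)) := by
    rw [Set.image_union, Ideal.span_union, Set.image_image, Set.image_pair, X_pow_eq_monomial,
      X_pow_eq_monomial]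
    rfl
  have hprod : X i ^ k * X j ^ k = monomial (Finsupp.single i k + Finsupp.single j k) (1 : R) := by
    rw [X_pow_eq_monomial, X_pow_eq_monomial, monomial_mul, one_mul]
  rw [hmonomial, mem_ideal_span_monomial_image, hprod] at H
  rw [mem_ideal_span_X_image]
  intro ν hν
  obtain ⟨s, hs, hle⟩ := H (Finsupp.single i k + Finsupp.single j k + ν) (by
    rwa [mem_support_iff, coeff_monomial_mul, one_mul, ← mem_support_iff])
  rcases hs with (rfl | rfl) | ⟨t, ht, rfl⟩
  · have := hle i
    simp only [Finsupp.coe_add, Pi.add_apply, Finsupp.single_eq_same, Finsupp.single_apply,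
      if_neg hij.symm] at this
    exact ⟨i, by simp, by omega⟩
  · have := hle j
    simp only [Finsupp.coe_add, Pi.add_apply, Finsupp.single_eq_same, Finsupp.single_apply,
      if_neg hij] at this
    exact ⟨j, by simp, by omega⟩
  · have := hle t
    simp only [Finsupp.coe_add, Pi.add_apply, Finsupp.single_eq_same, Finsupp.single_apply,
      if_neg (ne_of_mem_of_not_mem ht hi).symm, if_neg (ne_of_mem_of_not_mem ht hj).symm] at this
    exact ⟨t, Or.inr ht, by omega⟩

theorem one_notMem_span_X_image [Nontrivial R] (S : Set σ) :
    (1 : MvPolynomial σ R) ∉ Ideal.span (X '' S) := by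
  rw [mem_ideal_span_X_image]
  intro h
  obtain ⟨_, _, hi⟩ := h 0 (by simp)
  exact hi rfl

end MvPolynomial

theorem IsQuasiCyclic.exists_mem_span_singleton_pair {A M : Type*} [CommRing A] [AddCommGroup M]
    [Module A M] (h : IsQuasiCyclic A M) (m₁ m₂ : M) :
    ∃ p : M, m₁ ∈ Submodule.span A {p} ∧ m₂ ∈ Submodule.span A {p} := by
  obtain ⟨N, hcyclic, hmono, hcover⟩ := h
  obtain ⟨n₁, hn₁⟩ := hcover m₁
  obtain ⟨n₂, hn₂⟩ := hcover m₂
  obtain ⟨p, hp⟩ := hcyclic (max n₁ n₂)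
  exact ⟨p, hp ▸ hmono (le_max_left n₁ n₂) hn₁, hp ▸ hmono (le_max_right n₁ n₂) hn₂⟩

section SocleElt

open MvPolynomial

variable {σ R : Type*} [CommRing R] {i j : σ}

theorem mem_span_X_of_smul_socleElt_eq_zero (hij : i ≠ j) {a : MvPolynomial σ R}
    (ha : a • socleElt (X i : MvPolynomial σ R) (X j) = 0) : a ∈ Ideal.span (X '' {i, j}) := by
  have hmem : Localization.mk a ⟨X i * X j, Submonoid.mem_powers _⟩ ∈ cechSub (X i) (X j) := by
    have hsmul : Localization.mk a ⟨X i * X j, Submonoid.mem_powers _⟩ =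
        a • (Localization.mk 1 ⟨X i * X j, Submonoid.mem_powers _⟩ :
          Localization.Away (X i * X j : MvPolynomial σ R)) := by
      rw [Localization.smul_mk, smul_eq_mul, mul_one]
    rw [hsmul]
    exact (Submodule.Quotient.mk_eq_zero _).mp ha
  obtain ⟨n, hn⟩ := exists_mul_mem_span_pow_of_mk_mem_cechSub (pow_one _).symm hmem
  rw [← Set.union_empty {i, j}]
  refine mem_span_X_of_X_pow_mul_X_pow_mul_mem hij (T := ∅) (k := n) (Set.notMem_empty i)
    (Set.notMem_empty j) ?_
  rw [Set.image_empty, Ideal.span_empty, sup_bot_eq, ← mul_pow]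
  exact hn

theorem smul_ne_socleElt_of_mem_span_X [Nontrivial R] (hij : i ≠ j) {T : Set σ} (hi : i ∉ T)
    (hj : j ∉ T) {a : MvPolynomial σ R} (ha : a ∈ Ideal.span (X '' T))
    (p : H2Model (X i : MvPolynomial σ R) (X j)) :
    a • p ≠ socleElt (X i) (X j) := by
  obtain ⟨q, rfl⟩ := Submodule.Quotient.mk_surjective _ p
  induction q using Localization.induction_on with
  | H x =>
  obtain ⟨h₀, s⟩ := x
  obtain ⟨M, hM : (X i * X j) ^ M = (s : MvPolynomial σ R)⟩ := s.2
  intro h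
  replace h := (Submodule.Quotient.eq _).mp h
  beta_reduce at h
  rw [Localization.smul_mk, Localization.sub_mk] at h
  obtain ⟨n, hn⟩ := exists_mul_mem_span_pow_of_mk_mem_cechSub (N := M + 1)
    (by simp [← hM, pow_succ]) h
  refine one_notMem_span_X_image (R := R) _
    (mem_span_X_of_X_pow_mul_X_pow_mul_mem hij hi hj (k := n + M) ?_)
  -- the first term lies in `Ideal.span (X '' T)`, the second is the element `hn` provides
  have hsplit : X i ^ (n + M) * X j ^ (n + M) * 1 = (X i * X j) ^ (n + 1) * h₀ * a -
      (X i * X j) ^ n * (X i * X j * (a * h₀) - (X i * X j) ^ M * 1) := by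
    ring
  rw [hsplit]
  refine sub_mem (Ideal.mem_sup_right (Ideal.mul_mem_left _ _ ha)) (Ideal.mem_sup_left ?_)
  rw [add_assoc, hM]
  simpa only [smul_eq_mul] using hn

theorem not_socleElt_pair_mem_span_singleton [Nontrivial R] {k l : σ} (hij : i ≠ j)
    (hkl : k ≠ l) (hi : i ∉ ({k, l} : Set σ)) (hj : j ∉ ({k, l} : Set σ))
    (p : H2Model (X i : MvPolynomial σ R) (X j) × H2Model (X k : MvPolynomial σ R) (X l)) :
    ¬ ((socleElt (X i) (X j), 0) ∈ Submodule.span (MvPolynomial σ R) {p} ∧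
      (0, socleElt (X k) (X l)) ∈ Submodule.span (MvPolynomial σ R) {p}) := by
  rintro ⟨h₁, h₂⟩
  obtain ⟨a, ha⟩ := Submodule.mem_span_singleton.mp h₁
  obtain ⟨b, hb⟩ := Submodule.mem_span_singleton.mp h₂
  have ha₂ : a • socleElt (X k : MvPolynomial σ R) (X l) = 0 :=
    calc a • socleElt (X k) (X l) = (a • b • p).2 := by rw [hb]; rfl
      _ = (b • a • p).2 := by rw [smul_comm]
      _ = 0 := by rw [ha]; exact smul_zero b
  exact smul_ne_socleElt_of_mem_span_X hij hi hj (mem_span_X_of_smul_socleElt_eq_zero hkl ha₂) p.1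
    (congrArg Prod.fst ha)

end SocleElt

open MvPolynomial in
/-- for `A = k[x,y,z,w]` and `M = H²_{(x,y)}(A) ⊕ H²_{(z,w)}(A)`
(realized as Čech cokernels), the socle elements `1/(xy)` and `1/(zw)` do not lie in a
common cyclic submodule; in particular `M` is not quasi-cyclic. -/
theorem stmt18 (k : Type*) [Field k] :
    (∀ p : H2Model (X (0 : Fin 4) : MvPolynomial (Fin 4) k) (X 1) ×
          H2Model (X (2 : Fin 4) : MvPolynomial (Fin 4) k) (X 3),
        ¬ ((socleElt (X 0) (X 1), 0) ∈ Submodule.span (MvPolynomial (Fin 4) k) {p} ∧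
           ((0 : H2Model (X (0 : Fin 4) : MvPolynomial (Fin 4) k) (X 1)), socleElt (X 2) (X 3))
              ∈ Submodule.span (MvPolynomial (Fin 4) k) {p})) ∧
      ¬ IsQuasiCyclic (MvPolynomial (Fin 4) k)
          (H2Model (X (0 : Fin 4) : MvPolynomial (Fin 4) k) (X 1) ×
            H2Model (X (2 : Fin 4) : MvPolynomial (Fin 4) k) (X 3)) := by
  have not_in_cyclic := not_socleElt_pair_mem_span_singleton (R := k) (i := (0 : Fin 4))
    (j := 1) (k := 2) (l := 3) (by decide) (by decide) (by decide) (by decide)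
  refine ⟨not_in_cyclic, fun hM => ?_⟩
  obtain ⟨p, h₁, h₂⟩ := hM.exists_mem_span_singleton_pair _ _
  exact not_in_cyclic p ⟨h₁, h₂⟩
end
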